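/- The 4-dimensional complex algebra A_{2,0} on gl(2, ℂ) with basis x, y, h, z and left multiplications L(x), L(y), L(h), L(z) given by the matrices L(x) = [[0,0,−1,1],[0,0,0,0],[0,1/2,0,0],[0,1/2,0,0]], L(y) = [[0,0,0,0],[0,0,1,1],[−1/2,0,0,0],[1/2,0,0,0]], L(h) = [[1,0,0,0],[0,−1,0,0],[0,0,0,1],[0,0,1,0]], L(z) = [[1,0,0,0],[0,1,0,0],[0,0,1,0],[0,0,0,1]] (columns indexed by x, y, h, z) defines an associative algebra. -/
import Mathlib


/-- Left-multiplication matrices of the algebra `A_{2,0}` on `ℂ⁴` with basis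
`(x, y, h, z)` (columns indexed by the basis). -/
noncomputable def L20 : Fin 4 → Matrix (Fin 4) (Fin 4) ℂ :=
  ![!![0, 0, -1, 1; 0, 0, 0, 0; 0, 1/2, 0, 0; 0, 1/2, 0, 0],
    !![0, 0, 0, 0; 0, 0, 1, 1; -1/2, 0, 0, 0; 1/2, 0, 0, 0],
    !![1, 0, 0, 0; 0, -1, 0, 0; 0, 0, 0, 1; 0, 0, 1, 0],
    !![1, 0, 0, 0; 0, 1, 0, 0; 0, 0, 1, 0; 0, 0, 0, 1]]

/-- The bilinear product on `ℂ⁴` determined by the left multiplications `L20`. -/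
noncomputable def mul20 (a b : Fin 4 → ℂ) : Fin 4 → ℂ :=
  ∑ i : Fin 4, a i • (L20 i).mulVec b

lemma mul20_eq (a b : Fin 4 → ℂ) : mul20 a b =
    ![-(a 0) * b 2 + a 0 * b 3 + a 2 * b 0 + a 3 * b 0,
      a 1 * b 2 + a 1 * b 3 - a 2 * b 1 + a 3 * b 1,
      a 0 * b 1 / 2 - a 1 * b 0 / 2 + a 2 * b 3 + a 3 * b 2,
      a 0 * b 1 / 2 + a 1 * b 0 / 2 + a 2 * b 2 + a 3 * b 3] := by
  funext j
  fin_cases j <;>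
  · simp [mul20, L20, Matrix.mulVec, dotProduct, Fin.sum_univ_four, Matrix.vecHead, Matrix.vecTail]
    ring

/-- The algebra `A_{2,0}` is associative. -/
theorem A20_associative :
    ∀ a b c : Fin 4 → ℂ, mul20 (mul20 a b) c = mul20 a (mul20 b c) := by
  intro a b c
  funext j
  fin_cases j <;>
  · simp [mul20_eq]
    ring
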